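/- Over F_2, the derivation Q_0 (determined by Q_0(x) = x² on linear forms) on the symmetric algebra S*(W) of a nonzero finite dimensional F_2-vector space W yields an exact complex 0 → S^1(W) → S^2(W) → S^3(W) → ⋯; i.e., ker(Q_0: S^n → S^{n+1}) = im(Q_0: S^{n-1} → S^n) for all n ≥ 1. -/

import Mathlib

/-!
Order the variables. A nonconstant monomial factors as `X s ^ k * m` with `s` its largest
variable and `m` a monomial in smaller variables; let `h (X s ^ k * m)` be `X s ^ (k - 1) * m` if
`k` is even and `0` if `k` is odd. Since `Q₀ (X s ^ k * m) = k X s ^ (k + 1) m + X s ^ k Q₀ m`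
and `Q₀ m` still only involves variables below `s`, a parity check gives `Q₀ h + h Q₀ = id` on
nonconstant monomials. So `h` is a contracting homotopy onto the constants, lowering degree by
one, and every cycle of positive degree is the boundary `Q₀ (h p)`.
-/

open MvPolynomial

/-- The Milnor derivation `Q_0` on the symmetric (polynomial) algebra over `𝔽₂`:
the unique derivation with `Q_0 x = x²` on linear forms. -/
noncomputable def Q0der (σ : Type) :
    Derivation (ZMod 2) (MvPolynomial σ (ZMod 2)) (MvPolynomial σ (ZMod 2)) :=
  MvPolynomial.mkDerivation (ZMod 2) (fun s => X s ^ 2)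

section

variable {σ : Type}

theorem Q0der_X (s : σ) : Q0der σ (X s) = X s ^ 2 :=
  mkDerivation_X _ _ _

theorem Q0der_X_pow (s : σ) (k : ℕ) : Q0der σ (X s ^ k) = (k : ZMod 2) • X s ^ (k + 1) := by
  rcases k with _ | k
  · simp
  · rw [Derivation.leibniz_pow, Q0der_X, Nat.add_sub_cancel, smul_eq_mul, ← pow_add,
      Nat.cast_smul_eq_nsmul]

theorem Q0der_X_pow_mul (s : σ) (k : ℕ) (m : MvPolynomial σ (ZMod 2)) :
    Q0der σ (X s ^ k * m) = (k : ZMod 2) • (X s ^ (k + 1) * m) + X s ^ k * Q0der σ m := by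
  rw [Derivation.leibniz, Q0der_X_pow, smul_eq_mul, smul_eq_mul, mul_smul_comm, add_comm,
    mul_comm m]

theorem Q0der_Q0der (p : MvPolynomial σ (ZMod 2)) : Q0der σ (Q0der σ p) = 0 := by
  induction p using MvPolynomial.induction_on with
  | C a => rw [← algebraMap_eq, Derivation.map_algebraMap, map_zero]
  | add p q hp hq => rw [map_add, map_add, hp, hq, add_zero]
  | mul_X p s hp =>
    rw [mul_comm, ← pow_one (X s), Q0der_X_pow_mul, map_add, Q0der_X_pow_mul, hp,
      Derivation.map_smul, Q0der_X_pow_mul]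
    have h2 : ((1 + 1 : ℕ) : ZMod 2) = 0 := rfl
    rw [h2, zero_smul, zero_add, mul_zero, add_zero, Nat.cast_one, one_smul,
      CharTwo.add_self_eq_zero]

theorem Q0der_mem_supported {S : Set σ} {p : MvPolynomial σ (ZMod 2)}
    (hp : p ∈ supported (ZMod 2) S) : Q0der σ p ∈ supported (ZMod 2) S := by
  rw [supported_eq_adjoin_X] at hp ⊢
  induction hp using Algebra.adjoin_induction with
  | mem x hx =>
    obtain ⟨s, hs, rfl⟩ := hx
    rw [Q0der_X]
    exact pow_mem (Algebra.subset_adjoin (Set.mem_image_of_mem X hs)) 2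
  | algebraMap r => rw [Derivation.map_algebraMap]; exact zero_mem _
  | add x y _ _ hx hy => rw [map_add]; exact add_mem hx hy
  | mul x y hx' hy' hx hy =>
    rw [Derivation.leibniz]
    exact add_mem (mul_mem hx' hy) (mul_mem hy' hx)

section Contraction

variable [LinearOrder σ]

noncomputable def contractMonomial (a : σ →₀ ℕ) : MvPolynomial σ (ZMod 2) :=
  if h : a.support.Nonempty then
    if Even (a (a.support.max' h)) then monomial (a - Finsupp.single (a.support.max' h) 1) 1
    else 0
  else 0

noncomputable def contraction : MvPolynomial σ (ZMod 2) →ₗ[ZMod 2] MvPolynomial σ (ZMod 2) :=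
  (basisMonomials σ (ZMod 2)).constr (ZMod 2) contractMonomial

theorem contraction_monomial (a : σ →₀ ℕ) (c : ZMod 2) :
    contraction (monomial a c) = c • contractMonomial a := by
  have h := (basisMonomials σ (ZMod 2)).constr_basis (ZMod 2) contractMonomial a
  rw [coe_basisMonomials] at h
  rw [← h, ← map_smul, smul_monomial, smul_eq_mul, mul_one, contraction]

theorem contractMonomial_add_single {b : σ →₀ ℕ} {s : σ} (hb : ∀ t ∈ b.support, t < s)
    {k : ℕ} (hk : k ≠ 0) :
    contractMonomial (b + Finsupp.single s k) =
      if Even k then monomial (b + Finsupp.single s (k - 1)) 1 else 0 := by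
  classical
  have hsb : s ∉ b.support := fun h => lt_irrefl s (hb s h)
  have hsupp : (b + Finsupp.single s k).support = insert s b.support := by
    rw [Finsupp.support_add_eq (by rwa [Finsupp.support_single s hk,
      Finset.disjoint_singleton_right]), Finsupp.support_single s hk, Finset.union_comm,
      Finset.insert_eq]
  have hne : (b + Finsupp.single s k).support.Nonempty := hsupp ▸ Finset.insert_nonempty _ _
  have hmax : (b + Finsupp.single s k).support.max' hne = s := by
    refine le_antisymm (Finset.max'_le _ _ _ fun t ht => ?_)
      (Finset.le_max' _ _ (by simp [hsupp]))
    rw [hsupp, Finset.mem_insert] at ht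
    exact ht.elim le_of_eq fun ht => (hb t ht).le
  rw [contractMonomial, dif_pos hne, hmax, Finsupp.add_apply,
    Finsupp.notMem_support_iff.1 hsb, Finsupp.single_eq_same,
    zero_add, add_tsub_assoc_of_le (by simpa [Nat.one_le_iff_ne_zero]), ← Finsupp.single_tsub]

theorem exists_eq_add_single_of_ne_zero {a : σ →₀ ℕ} (ha : a ≠ 0) :
    ∃ b s k, (∀ t ∈ b.support, t < s) ∧ k ≠ 0 ∧ a = b + Finsupp.single s k := by
  classical
  have hne : a.support.Nonempty := Finsupp.support_nonempty_iff.2 ha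
  set s := a.support.max' hne
  refine ⟨a.erase s, s, a s, fun t ht => ?_, Finsupp.mem_support_iff.1 (a.support.max'_mem hne),
    (Finsupp.erase_add_single s a).symm⟩
  rw [Finsupp.support_erase, Finset.mem_erase] at ht
  exact lt_of_le_of_ne (a.support.le_max' t ht.2) ht.1

theorem contraction_X_pow_mul {s : σ} {k : ℕ} (hk : k ≠ 0) {m : MvPolynomial σ (ZMod 2)}
    (hm : m ∈ supported (ZMod 2) (Set.Iio s)) :
    contraction (X s ^ k * m) = if Even k then X s ^ (k - 1) * m else 0 := by
  have hX : ∀ j b (c : ZMod 2),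
      X s ^ j * monomial b c = monomial (b + Finsupp.single s j) c := by
    intro j b c
    rw [X_pow_eq_monomial, monomial_mul, one_mul, add_comm]
  have key : ∀ b ∈ m.support, contraction (X s ^ k * monomial b (coeff b m)) =
      if Even k then X s ^ (k - 1) * monomial b (coeff b m) else 0 := by
    intro b hb
    have hbs : ∀ t ∈ b.support, t < s := fun t ht =>
      mem_supported.1 hm ((mem_vars_iff_mem_support t).2 ⟨b, hb, ht⟩)
    rw [hX, contraction_monomial, contractMonomial_add_single hbs hk, hX]
    split_ifs <;> simp [smul_monomial]
  conv_lhs => rw [m.as_sum, Finset.mul_sum, map_sum]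
  rw [Finset.sum_congr rfl key]
  split_ifs
  · rw [← Finset.mul_sum, ← m.as_sum]
  · exact Finset.sum_const_zero

theorem isHomogeneous_contractMonomial (a : σ →₀ ℕ) :
    (contractMonomial a).IsHomogeneous (a.degree - 1) := by
  rcases eq_or_ne a 0 with rfl | ha
  · rw [contractMonomial, dif_neg (by simp)]
    exact isHomogeneous_zero _ _ _
  obtain ⟨b, s, k, hb, hk, rfl⟩ := exists_eq_add_single_of_ne_zero ha
  rw [contractMonomial_add_single hb hk]
  split_ifs
  · refine isHomogeneous_monomial _ ?_
    simp only [map_add, Finsupp.degree_single]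
    omega
  · exact isHomogeneous_zero _ _ _

theorem MvPolynomial.IsHomogeneous.contraction {p : MvPolynomial σ (ZMod 2)} {n : ℕ}
    (hp : p.IsHomogeneous n) : (contraction p).IsHomogeneous (n - 1) := by
  rw [p.as_sum, map_sum]
  refine IsHomogeneous.sum _ _ _ fun a ha => ?_
  have hdeg : a.degree = n := by
    rw [Finsupp.degree_eq_weight_one]
    exact hp (mem_support_iff.1 ha)
  rw [contraction_monomial, ← mem_homogeneousSubmodule]
  exact Submodule.smul_mem _ _ (hdeg ▸ isHomogeneous_contractMonomial a)

theorem Q0der_contraction_add_contraction_Q0der_monomial {a : σ →₀ ℕ} (ha : a ≠ 0) :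
    Q0der σ (contraction (monomial a 1)) + contraction (Q0der σ (monomial a 1)) =
      monomial a 1 := by
  obtain ⟨b, s, k, hb, hk, rfl⟩ := exists_eq_add_single_of_ne_zero ha
  set m : MvPolynomial σ (ZMod 2) := monomial b 1
  have hm : m ∈ supported (ZMod 2) (Set.Iio s) := by
    rw [mem_supported, vars_monomial one_ne_zero]
    exact hb
  have hXm : monomial (b + Finsupp.single s k) (1 : ZMod 2) = X s ^ k * m := by
    rw [X_pow_eq_monomial, monomial_mul, one_mul, add_comm]
  rw [hXm, Q0der_X_pow_mul, map_add, map_smul, contraction_X_pow_mul hk hm,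
    contraction_X_pow_mul (Nat.add_one_ne_zero k) hm,
    contraction_X_pow_mul hk (Q0der_mem_supported hm), Nat.add_sub_cancel]
  rcases Nat.even_or_odd k with he | ho
  · obtain ⟨j, rfl⟩ := Nat.exists_eq_add_one_of_ne_zero hk
    have hj : (j : ZMod 2) = 1 :=
      ZMod.natCast_eq_one_iff_odd.2 (by simpa [Nat.even_add_one] using he)
    -- both sides produce the term `X s ^ j * Q₀ m`, and the two copies cancel
    rw [if_pos he, if_neg (Nat.not_even_iff_odd.2 he.add_one), if_pos he, Nat.add_sub_cancel,
      Q0der_X_pow_mul, hj, one_smul, smul_zero, zero_add, add_assoc, CharTwo.add_self_eq_zero,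
      add_zero]
  · have hk1 : (k : ZMod 2) = 1 := ZMod.natCast_eq_one_iff_odd.2 ho
    rw [if_neg (Nat.not_even_iff_odd.2 ho), if_pos ho.add_one,
      if_neg (Nat.not_even_iff_odd.2 ho), map_zero, hk1, one_smul, zero_add, add_zero]

theorem Q0der_contraction_add_contraction_Q0der (p : MvPolynomial σ (ZMod 2)) :
    Q0der σ (contraction p) + contraction (Q0der σ p) + C (constantCoeff p) = p := by
  induction p using MvPolynomial.induction_on' with
  | monomial a c =>
    rcases eq_or_ne a 0 with rfl | ha
    · rw [contraction_monomial, contractMonomial, dif_neg (by simp), smul_zero, map_zero,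
        zero_add, monomial_zero', ← algebraMap_eq, Derivation.map_algebraMap, map_zero, zero_add,
        algebraMap_eq, constantCoeff_C]
    · have hc : monomial a c = c • monomial a 1 := by rw [smul_monomial, smul_eq_mul, mul_one]
      rw [constantCoeff_monomial, if_neg ha, hc, map_smul, Derivation.map_smul,
        Derivation.map_smul, map_smul, ← smul_add,
        Q0der_contraction_add_contraction_Q0der_monomial ha, C_0, add_zero]
  | add p q hp hq =>
    conv_rhs => rw [← hp, ← hq]
    simp only [map_add]
    abel

end Contraction

end

theorem stmt10_general (σ : Type) (n : ℕ) (hn : 1 ≤ n) :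
    ∀ p : MvPolynomial σ (ZMod 2), p.IsHomogeneous n →
      (Q0der σ p = 0 ↔ ∃ q : MvPolynomial σ (ZMod 2),
        q.IsHomogeneous (n - 1) ∧ p = Q0der σ q) := by
  let : LinearOrder σ := IsWellOrder.linearOrder WellOrderingRel
  intro p hp
  refine ⟨fun hQ => ⟨contraction p, hp.contraction, ?_⟩, ?_⟩
  · have h0 : constantCoeff p = 0 := hp.coeff_eq_zero (by rw [map_zero]; omega)
    have hp_eq := Q0der_contraction_add_contraction_Q0der p
    rwa [hQ, map_zero, add_zero, h0, C_0, add_zero, eq_comm] at hp_eq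
  · rintro ⟨q, -, rfl⟩
    exact Q0der_Q0der q

/-- Over `𝔽₂`, for a nonzero finite dimensional vector space `W`, the complex
`0 → S¹(W) → S²(W) → ⋯` given by `Q_0` is exact: for `n ≥ 1`, a homogeneous polynomial of
degree `n` is killed by `Q_0` if and only if it is `Q_0` of a homogeneous polynomial of
degree `n - 1`. -/
theorem stmt10 (σ : Type) [Fintype σ] [Nonempty σ] (n : ℕ) (hn : 1 ≤ n) :
    ∀ p : MvPolynomial σ (ZMod 2), p.IsHomogeneous n →
      (Q0der σ p = 0 ↔ ∃ q : MvPolynomial σ (ZMod 2),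
        q.IsHomogeneous (n - 1) ∧ p = Q0der σ q) :=
  stmt10_general σ n hn
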